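/- arXiv:2004.12075 — 2 statements merged into one kernel-verified Lean document; each statement's English description precedes it below -/
import Mathlib

section
/- (Matsumura's lemma) Let C₀ > 0, C₁ ≥ 0, q > 1, s > 1, and let q* = q/(q−1) be the Hölder conjugate of q. Suppose Φ : [2,∞) → ℝ is differentiable and satisfies Φ'(t) ≤ −(C₀/t)|Φ(t)|^q + C₁/t^s for all t ≥ 2. Then Φ(t) ≤ C₂ / (log t)^{q*−1} for all t ≥ 2, where C₂ = (1/log 2)·((log 2)^{q*} Φ(2) + C₁ ∫_2^∞ (log τ)^{q*} τ^{−s} dτ) + (q*/(q C₀))^{q*−1}. -/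
/-!
Write `p = q/(q-1)`. Young's inequality `p x - C₀ L |x|^q ≤ (p/(q C₀))^(p-1) L^(1-p)`, applied with
`L = log t` after multiplying the differential inequality by `(log t)^p`, shows that
`(log t)^p Φ(t) - (p/(q C₀))^(p-1) log t - C₁ ∫_2^t (log τ)^p τ^(-s) dτ` is nonincreasing.
Dividing by `(log t)^p` gives the bound once `B = (log 2)^p Φ(2) + C₁ ∫_2^∞ (log τ)^p τ^(-s) dτ`
is known to be nonnegative, which follows from `Φ(2) ≥ -C₁ 2^(1-s)/(s-1)`. If that failed, `-Φ`
would stay above some `δ > 0` for all `t ≥ 2`, and then `(-Φ)^(1-q) + (q-1) C₀ log t` would stay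
bounded, which is impossible since `(-Φ)^(1-q) > 0` and `log t → ∞`.
-/

open MeasureTheory Real Set Filter Asymptotics

theorem monotoneOn_Ici_of_hasDerivAt_nonneg {a : ℝ} {f f' : ℝ → ℝ}
    (hf : ∀ x ≥ a, HasDerivAt f (f' x) x) (hf' : ∀ x ≥ a, 0 ≤ f' x) :
    MonotoneOn f (Ici a) :=
  monotoneOn_of_hasDerivWithinAt_nonneg (convex_Ici a)
    (fun x hx => (hf x hx).continuousAt.continuousWithinAt)
    (fun x hx => (hf x (interior_subset hx)).hasDerivWithinAt)
    (fun x hx => hf' x (interior_subset hx))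

theorem antitoneOn_Ici_of_hasDerivAt_nonpos {a : ℝ} {f f' : ℝ → ℝ}
    (hf : ∀ x ≥ a, HasDerivAt f (f' x) x) (hf' : ∀ x ≥ a, f' x ≤ 0) :
    AntitoneOn f (Ici a) :=
  antitoneOn_of_hasDerivWithinAt_nonpos (convex_Ici a)
    (fun x hx => (hf x hx).continuousAt.continuousWithinAt)
    (fun x hx => (hf x (interior_subset hx)).hasDerivWithinAt)
    (fun x hx => hf' x (interior_subset hx))

theorem hasDerivAt_rpow_one_sub_div_one_sub {s t : ℝ} (hs : s ≠ 1) (ht : 0 < t) :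
    HasDerivAt (fun t => t ^ (1 - s) / (1 - s)) (t ^ s)⁻¹ t := by
  refine ((hasDerivAt_rpow_const (p := 1 - s) (Or.inl ht.ne')).div_const (1 - s)).congr_deriv ?_
  rw [sub_sub_cancel_left, rpow_neg ht.le, mul_div_cancel_left₀ _ (sub_ne_zero.2 hs.symm)]

theorem Real.HolderConjugate.mul_sub_mul_abs_rpow_le {p q a : ℝ} (hpq : q.HolderConjugate p)
    (ha : 0 < a) (x : ℝ) : p * x - a * |x| ^ q ≤ (p / (q * a)) ^ (p - 1) := by
  have hqa : 0 < q * a := mul_pos hpq.pos ha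
  -- Young's inequality for `c * |x|` and `p / c`, with `c ^ q = q * a`
  set c := (q * a) ^ q⁻¹
  have hc : 0 < c := rpow_pos_of_pos hqa _
  have hcq : c ^ q = q * a := by
    rw [← rpow_mul hqa.le, inv_mul_cancel₀ hpq.ne_zero, rpow_one]
  have hcp : c ^ p = (q * a) ^ (p - 1) := by
    rw [← rpow_mul hqa.le, inv_mul_eq_div, hpq.symm.div_conj_eq_sub_one]
  have young := young_inequality_of_nonneg (mul_nonneg hc.le (abs_nonneg x))
    (div_nonneg hpq.symm.nonneg hc.le) hpq
  have hlhs : c * |x| * (p / c) = p * |x| := by field_simp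
  have hx : q * a * |x| ^ q / q = a * |x| ^ q := by field_simp [hpq.ne_zero]
  have hp : p ^ p / (q * a) ^ (p - 1) / p = (p / (q * a)) ^ (p - 1) := by
    rw [div_right_comm, ← rpow_sub_one hpq.symm.ne_zero, div_rpow hpq.symm.nonneg hqa.le]
  rw [mul_rpow hc.le (abs_nonneg x), hcq, div_rpow hpq.symm.nonneg hc.le, hcp, hlhs, hx, hp]
    at young
  nlinarith [le_abs_self x, hpq.symm.pos]

theorem continuousOn_log_rpow_div_rpow (p s : ℝ) :
    ContinuousOn (fun τ => log τ ^ p / τ ^ s) (Ioi 1) := by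
  intro τ (hτ : 1 < τ)
  have hτ0 : 0 < τ := one_pos.trans hτ
  refine ContinuousAt.continuousWithinAt (ContinuousAt.div ?_ ?_ (rpow_pos_of_pos hτ0 s).ne')
  · exact (continuousAt_log hτ0.ne').rpow_const (Or.inl (log_pos hτ).ne')
  · exact continuousAt_id.rpow_const (Or.inl hτ0.ne')

theorem integrableOn_Ioi_log_rpow_div_rpow {a : ℝ} (p : ℝ) {s : ℝ} (ha : 1 < a) (hs : 1 < s) :
    IntegrableOn (fun τ => log τ ^ p / τ ^ s) (Ioi a) := by
  have hcont : ContinuousOn (fun τ => log τ ^ p / τ ^ s) (Ici a) :=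
    (continuousOn_log_rpow_div_rpow p s).mono (Ici_subset_Ioi.2 ha)
  have hO : (fun τ => log τ ^ p / τ ^ s) =O[atTop] fun τ => τ ^ ((s - 1) / 2 + -s) := by
    have hε : 0 < (s - 1) / 2 := by linarith
    refine ((isLittleO_log_rpow_rpow_atTop p hε).isBigO.mul
      (isBigO_refl (fun τ : ℝ => τ ^ (-s)) atTop)).congr' ?_ ?_
    all_goals filter_upwards [eventually_gt_atTop 0] with τ hτ
    · rw [rpow_neg hτ.le, div_eq_mul_inv]
    · rw [rpow_add hτ]
  exact ((hcont.locallyIntegrableOn measurableSet_Ici).integrableOn_of_isBigO_atTop hO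
    (integrableAtFilter_rpow_atTop_iff.2 (by linarith))).mono_set Ioi_subset_Ici_self

section Matsumura

variable {a C₀ C₁ q s : ℝ} {Φ Φ' : ℝ → ℝ}

theorem monotoneOn_neg_add_mul_rpow_one_sub_div (ha : 0 < a) (hC₀ : 0 ≤ C₀) (hs : s ≠ 1)
    (hderiv : ∀ t ≥ a, HasDerivAt Φ (Φ' t) t)
    (hineq : ∀ t ≥ a, Φ' t ≤ -(C₀ / t) * |Φ t| ^ q + C₁ / t ^ s) :
    MonotoneOn (fun t => -Φ t + C₁ * (t ^ (1 - s) / (1 - s))) (Ici a) := by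
  refine monotoneOn_Ici_of_hasDerivAt_nonneg (fun t ht => (hderiv t ht).neg.add
    ((hasDerivAt_rpow_one_sub_div_one_sub hs (ha.trans_le ht)).const_mul C₁)) fun t ht => ?_
  have : 0 ≤ C₀ / t * |Φ t| ^ q := by have := ha.trans_le ht; positivity
  linarith [hineq t ht, div_eq_mul_inv C₁ (t ^ s)]

theorem antitoneOn_rpow_one_sub_add_mul_log (ha : 0 < a) (hq : 1 < q) (hC₁ : 0 ≤ C₁) (hs : s ≠ 1)
    {δ : ℝ} (hδ : 0 < δ) (hΦδ : ∀ t ≥ a, δ ≤ -Φ t)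
    (hderiv : ∀ t ≥ a, HasDerivAt Φ (Φ' t) t)
    (hineq : ∀ t ≥ a, Φ' t ≤ -(C₀ / t) * |Φ t| ^ q + C₁ / t ^ s) :
    AntitoneOn (fun t => (-Φ t) ^ (1 - q) + (q - 1) * C₀ * log t
      - (q - 1) * C₁ * δ ^ (-q) * (t ^ (1 - s) / (1 - s))) (Ici a) := by
  refine antitoneOn_Ici_of_hasDerivAt_nonpos (f' := fun t => -Φ' t * (1 - q) * (-Φ t) ^ (-q)
    + (q - 1) * C₀ * t⁻¹ - (q - 1) * C₁ * δ ^ (-q) * (t ^ s)⁻¹) (fun t ht => ?_) fun t ht => ?_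
  · have hu : -Φ t ≠ 0 := (hδ.trans_le (hΦδ t ht)).ne'
    have ht0 := ha.trans_le ht
    refine ((((hderiv t ht).neg.rpow_const (p := 1 - q) (Or.inl hu)).add
      ((hasDerivAt_log ht0.ne').const_mul ((q - 1) * C₀))).sub
      ((hasDerivAt_rpow_one_sub_div_one_sub hs ht0).const_mul
        ((q - 1) * C₁ * δ ^ (-q)))).congr_deriv ?_
    rw [sub_sub_cancel_left, Pi.neg_apply]
  · have ht0 := ha.trans_le ht
    have hu : 0 < -Φ t := hδ.trans_le (hΦδ t ht)
    have hinv : (-Φ t) ^ (-q) * (-Φ t) ^ q = 1 := by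
      rw [← rpow_add hu, neg_add_cancel, rpow_zero]
    have hδu : (-Φ t) ^ (-q) ≤ δ ^ (-q) := rpow_le_rpow_of_nonpos hδ (hΦδ t ht) (by linarith)
    have hineq' := mul_le_mul_of_nonneg_left (hineq t ht)
      (mul_nonneg (sub_nonneg.2 hq.le) (rpow_nonneg hu.le (-q)))
    rw [abs_of_neg (neg_pos.1 hu), div_eq_mul_inv C₀, div_eq_mul_inv C₁] at hineq'
    have hδu' := mul_le_mul_of_nonneg_left hδu
      (by positivity : 0 ≤ (q - 1) * C₁ * (t ^ s)⁻¹)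
    linear_combination hineq' + hδu' - (q - 1) * C₀ * t⁻¹ * hinv

theorem exists_neg_lt_apply (ha : 0 < a) (hC₀ : 0 < C₀) (hC₁ : 0 ≤ C₁) (hq : 1 < q)
    (hs : 1 < s) {δ : ℝ} (hδ : 0 < δ)
    (hderiv : ∀ t ≥ a, HasDerivAt Φ (Φ' t) t)
    (hineq : ∀ t ≥ a, Φ' t ≤ -(C₀ / t) * |Φ t| ^ q + C₁ / t ^ s) :
    ∃ t ≥ a, -δ < Φ t := by
  by_contra! hΦ
  have hΦδ : ∀ t ≥ a, δ ≤ -Φ t := fun t ht => le_neg_of_le_neg (hΦ t ht)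
  have hanti := antitoneOn_rpow_one_sub_add_mul_log ha hq hC₁ hs.ne' hδ hΦδ hderiv hineq
  have hqC₀ : 0 < (q - 1) * C₀ := mul_pos (by linarith) hC₀
  obtain ⟨t, hlog, hta⟩ := ((tendsto_log_atTop.eventually_gt_atTop
    (((-Φ a) ^ (1 - q) + (q - 1) * C₀ * log a
      - (q - 1) * C₁ * δ ^ (-q) * (a ^ (1 - s) / (1 - s))) / ((q - 1) * C₀))).and
    (eventually_ge_atTop a)).exists
  have hle := hanti self_mem_Ici hta hta
  rw [div_lt_iff₀ hqC₀] at hlog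
  have hpos : 0 < (-Φ t) ^ (1 - q) := rpow_pos_of_pos (hδ.trans_le (hΦδ t hta)) _
  have hneg : (q - 1) * C₁ * δ ^ (-q) * (t ^ (1 - s) / (1 - s)) ≤ 0 :=
    mul_nonpos_of_nonneg_of_nonpos (by have := hq.le; positivity)
      (div_nonpos_of_nonneg_of_nonpos (rpow_nonneg (ha.le.trans hta) _) (by linarith))
  simp only at hle
  linarith

theorem neg_mul_rpow_one_sub_div_le (ha : 0 < a) (hC₀ : 0 < C₀) (hC₁ : 0 ≤ C₁) (hq : 1 < q)
    (hs : 1 < s) (hderiv : ∀ t ≥ a, HasDerivAt Φ (Φ' t) t)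
    (hineq : ∀ t ≥ a, Φ' t ≤ -(C₀ / t) * |Φ t| ^ q + C₁ / t ^ s) :
    -(C₁ * (a ^ (1 - s) / (s - 1))) ≤ Φ a := by
  by_contra! hΦa
  obtain ⟨t, hta, hlt⟩ := exists_neg_lt_apply ha hC₀ hC₁ hq hs
    (δ := -Φ a - C₁ * (a ^ (1 - s) / (s - 1))) (by linarith) hderiv hineq
  have hmono := monotoneOn_neg_add_mul_rpow_one_sub_div ha hC₀.le hs.ne' hderiv hineq
    self_mem_Ici hta hta
  have ht : 0 ≤ C₁ * (t ^ (1 - s) / (s - 1)) :=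
    mul_nonneg hC₁ (div_nonneg (rpow_nonneg (ha.le.trans hta) _) (by linarith))
  have hsign (x : ℝ) : x ^ (1 - s) / (1 - s) = -(x ^ (1 - s) / (s - 1)) := by
    rw [← div_neg, neg_sub]
  simp only [hsign] at hmono
  linarith

theorem hasDerivAt_intervalIntegral_log_rpow_div_rpow {a t : ℝ} (p s : ℝ) (ha : 1 < a)
    (ht : 1 < t) :
    HasDerivAt (fun u => ∫ τ in a..u, log τ ^ p / τ ^ s) (log t ^ p / t ^ s) t := by
  have hcont := continuousOn_log_rpow_div_rpow p s
  refine intervalIntegral.integral_hasDerivAt_right ?_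
    (hcont.stronglyMeasurableAtFilter isOpen_Ioi t ht) (hcont.continuousAt (Ioi_mem_nhds ht))
  exact (hcont.mono fun x hx => (lt_min ha ht).trans_le hx.1).intervalIntegrable

theorem antitoneOn_log_rpow_mul_sub {p : ℝ} (ha : 1 < a) (hC₀ : 0 < C₀)
    (hpq : q.HolderConjugate p) (hderiv : ∀ t ≥ a, HasDerivAt Φ (Φ' t) t)
    (hineq : ∀ t ≥ a, Φ' t ≤ -(C₀ / t) * |Φ t| ^ q + C₁ / t ^ s) :
    AntitoneOn (fun t => log t ^ p * Φ t - (p / (q * C₀)) ^ (p - 1) * log t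
      - C₁ * ∫ τ in a..t, log τ ^ p / τ ^ s) (Ici a) := by
  set A := (p / (q * C₀)) ^ (p - 1)
  refine antitoneOn_Ici_of_hasDerivAt_nonpos (f' := fun t => t⁻¹ * p * log t ^ (p - 1) * Φ t
    + log t ^ p * Φ' t - A * t⁻¹ - C₁ * (log t ^ p / t ^ s)) (fun t ht => ?_) fun t ht => ?_
  · have ht1 := ha.trans_le ht
    have hlog := (hasDerivAt_log (one_pos.trans ht1).ne').rpow_const (p := p)
      (Or.inl (log_pos ht1).ne')
    exact ((hlog.mul (hderiv t ht)).sub ((hasDerivAt_log (one_pos.trans ht1).ne').const_mul A)).sub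
      ((hasDerivAt_intervalIntegral_log_rpow_div_rpow p s ha ht1).const_mul C₁)
  · have ht1 := ha.trans_le ht
    have ht0 := one_pos.trans ht1
    set L := log t
    have hL : 0 < L := log_pos ht1
    have hLp : L ^ p = L ^ (p - 1) * L := by rw [← rpow_add_one hL.ne', sub_add_cancel]
    have hA : (p / (q * (C₀ * L))) ^ (p - 1) * L ^ (p - 1) = A := by
      rw [← mul_rpow (by have := hpq.pos; have := hpq.symm.pos; positivity) hL.le]
      congr 1
      field_simp
    have hyoung := mul_le_mul_of_nonneg_right
      (hpq.mul_sub_mul_abs_rpow_le (mul_pos hC₀ hL) (Φ t)) (rpow_nonneg hL.le (p - 1))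
    rw [hA] at hyoung
    have hineq' := mul_le_mul_of_nonneg_left (hineq t ht) (rpow_nonneg hL.le p)
    have hyoung' := mul_le_mul_of_nonneg_left hyoung (inv_nonneg.2 ht0.le)
    rw [hLp] at hineq' ⊢
    linear_combination hineq' + hyoung'

theorem log_rpow_mul_rpow_one_sub_div_le_integral {a p s : ℝ} (ha : 1 < a) (hp : 0 ≤ p)
    (hs : 1 < s) :
    log a ^ p * (a ^ (1 - s) / (s - 1)) ≤ ∫ τ in Ioi a, log τ ^ p / τ ^ s := by
  have ha0 : 0 < a := one_pos.trans ha
  calc log a ^ p * (a ^ (1 - s) / (s - 1)) = ∫ τ in Ioi a, log a ^ p * τ ^ (-s) := by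
        rw [integral_const_mul, integral_Ioi_rpow_of_lt (by linarith) ha0, neg_add_eq_sub,
          neg_div, ← div_neg, neg_sub]
    _ ≤ ∫ τ in Ioi a, log τ ^ p / τ ^ s := by
      refine setIntegral_mono_on ((integrableOn_Ioi_rpow_of_lt (by linarith) ha0).const_mul _)
        (integrableOn_Ioi_log_rpow_div_rpow p ha hs) measurableSet_Ioi fun τ (hτ : a < τ) => ?_
      have hτ0 := ha0.trans hτ
      rw [rpow_neg hτ0.le, ← div_eq_mul_inv]
      gcongr
      exact (log_pos ha).le

theorem log_rpow_mul_add_mul_integral_nonneg {p : ℝ} (ha : 1 < a) (hC₀ : 0 < C₀) (hC₁ : 0 ≤ C₁)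
    (hq : 1 < q) (hp : 0 ≤ p) (hs : 1 < s) (hderiv : ∀ t ≥ a, HasDerivAt Φ (Φ' t) t)
    (hineq : ∀ t ≥ a, Φ' t ≤ -(C₀ / t) * |Φ t| ^ q + C₁ / t ^ s) :
    0 ≤ log a ^ p * Φ a + C₁ * ∫ τ in Ioi a, log τ ^ p / τ ^ s := by
  have hΦa := mul_le_mul_of_nonneg_left
    (neg_mul_rpow_one_sub_div_le (one_pos.trans ha) hC₀ hC₁ hq hs hderiv hineq)
    (rpow_nonneg (log_pos ha).le p)
  have hI := mul_le_mul_of_nonneg_left (log_rpow_mul_rpow_one_sub_div_le_integral ha hp hs) hC₁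
  linarith

theorem le_div_log_rpow_of_hasDerivAt_le {p : ℝ} (ha : 1 < a) (hC₀ : 0 < C₀) (hC₁ : 0 ≤ C₁)
    (hpq : q.HolderConjugate p) (hs : 1 < s) (hderiv : ∀ t ≥ a, HasDerivAt Φ (Φ' t) t)
    (hineq : ∀ t ≥ a, Φ' t ≤ -(C₀ / t) * |Φ t| ^ q + C₁ / t ^ s) {t : ℝ} (ht : a ≤ t) :
    Φ t ≤ ((1 / log a) * (log a ^ p * Φ a + C₁ * ∫ τ in Ioi a, log τ ^ p / τ ^ s)
      + (p / (q * C₀)) ^ (p - 1)) / log t ^ (p - 1) := by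
  have hM := antitoneOn_log_rpow_mul_sub ha hC₀ hpq hderiv hineq self_mem_Ici ht ht
  simp only [intervalIntegral.integral_same, mul_zero, sub_zero] at hM
  set I := ∫ τ in Ioi a, log τ ^ p / τ ^ s
  set B := log a ^ p * Φ a + C₁ * I
  set A := (p / (q * C₀)) ^ (p - 1)
  have hB : 0 ≤ B := log_rpow_mul_add_mul_integral_nonneg ha hC₀ hC₁
    hpq.lt hpq.symm.nonneg hs hderiv hineq
  have hA : 0 ≤ A := rpow_nonneg (div_nonneg hpq.symm.nonneg (mul_pos hpq.pos hC₀).le) _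
  have hla : 0 < log a := log_pos ha
  have hlt : log a ≤ log t := log_le_log (one_pos.trans ha) ht
  have hJ : C₁ * ∫ τ in a..t, log τ ^ p / τ ^ s ≤ C₁ * I := by
    refine mul_le_mul_of_nonneg_left ?_ hC₁
    rw [intervalIntegral.integral_of_le ht]
    exact setIntegral_mono_set (integrableOn_Ioi_log_rpow_div_rpow p ha hs)
      ((ae_restrict_iff' measurableSet_Ioi).2 (Eventually.of_forall fun τ (hτ : a < τ) =>
        div_nonneg (rpow_nonneg (log_pos (ha.trans hτ)).le _) (rpow_nonneg (by linarith) _)))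
      Ioc_subset_Ioi_self.eventuallyLE
  have hLp : log t ^ p = log t ^ (p - 1) * log t := by
    rw [← rpow_add_one (hla.trans_le hlt).ne', sub_add_cancel]
  rw [le_div_iff₀ (rpow_pos_of_pos (hla.trans_le hlt) _)]
  refine le_of_mul_le_mul_right ?_ (hla.trans_le hlt)
  have hBa : B ≤ B * log t / log a := by
    rw [le_div_iff₀ hla]
    exact mul_le_mul_of_nonneg_left hlt hB
  calc Φ t * log t ^ (p - 1) * log t ≤ B + A * (log t - log a) := by
        rw [mul_assoc, mul_comm, ← hLp]
        linarith
    _ ≤ (1 / log a * B + A) * log t := by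
      rw [one_div_mul_eq_div, add_mul, div_mul_eq_mul_div]
      linarith [mul_nonneg hA hla.le]

end Matsumura

/-- Matsumura's lemma: if Φ'(t) ≤ -(C₀/t)|Φ(t)|^q + C₁/t^s for t ≥ 2, with
C₀ > 0, C₁ ≥ 0, q > 1, s > 1, then Φ(t) ≤ C₂ / (log t)^(q*-1) for t ≥ 2, where
q* = q/(q-1) and C₂ is the explicit constant below. -/
theorem stmt_6 (C₀ C₁ q s : ℝ) (hC₀ : 0 < C₀) (hC₁ : 0 ≤ C₁)
    (hq : 1 < q) (hs : 1 < s) (Φ Φ' : ℝ → ℝ)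
    (hderiv : ∀ t ≥ (2:ℝ), HasDerivAt Φ (Φ' t) t)
    (hineq : ∀ t ≥ (2:ℝ), Φ' t ≤ -(C₀ / t) * |Φ t| ^ q + C₁ / t ^ s) :
    ∀ t ≥ (2:ℝ), Φ t ≤
      ((1 / Real.log 2) * ((Real.log 2) ^ (q / (q - 1)) * Φ 2 +
          C₁ * ∫ τ in Set.Ioi (2:ℝ), (Real.log τ) ^ (q / (q - 1)) / τ ^ s) +
        ((q / (q - 1)) / (q * C₀)) ^ (q / (q - 1) - 1)) /
      (Real.log t) ^ (q / (q - 1) - 1) := fun _ ht =>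
  le_div_log_rpow_of_hasDerivAt_le one_lt_two hC₀ hC₁ (Real.HolderConjugate.conjExponent hq) hs
    hderiv hineq ht
end

section
/- Let C₀ > 0, s > 1, C₁ ≥ 0, and suppose Φ : [2,∞) → [0,∞) is differentiable with Φ'(t) ≤ −(2C₀/t)Φ(t)² + C₁/t^s for t ≥ 2. Then there exists a constant C (depending on C₀, C₁, s, Φ(2)) such that Φ(t) ≤ C/log t for all t ≥ 2. -/
open Real Set

/-- Special case q = 2 of Matsumura's lemma: if Φ ≥ 0 on [2,∞) and
Φ'(t) ≤ -(2C₀/t)Φ(t)² + C₁/t^s, then Φ(t) ≤ C / log t for t ≥ 2. -/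
theorem stmt_7 (C₀ C₁ s : ℝ) (hC₀ : 0 < C₀) (hC₁ : 0 ≤ C₁) (hs : 1 < s)
    (Φ Φ' : ℝ → ℝ) (hnonneg : ∀ t ≥ (2:ℝ), 0 ≤ Φ t)
    (hderiv : ∀ t ≥ (2:ℝ), HasDerivAt Φ (Φ' t) t)
    (hineq : ∀ t ≥ (2:ℝ), Φ' t ≤ -(2 * C₀ / t) * (Φ t) ^ 2 + C₁ / t ^ s) :
    ∃ C > (0:ℝ), ∀ t ≥ (2:ℝ), Φ t ≤ C / Real.log t := by
  set K : ℝ := (2 / (s - 1)) ^ 2 with hK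
  have hs1 : (0:ℝ) < s - 1 := by linarith
  have hKpos : 0 < K := by positivity
  set A : ℝ := max (max 1 (Φ 2 / Real.log 2)) ((C₁ * K + 2) / (2 * C₀)) with hA
  have hA1 : (1:ℝ) ≤ A := le_trans (le_max_left _ _) (le_max_left _ _)
  have hAΦ : Φ 2 / Real.log 2 ≤ A := le_trans (le_max_right _ _) (le_max_left _ _)
  have hA2 : (C₁ * K + 2) / (2 * C₀) ≤ A := le_max_right _ _
  have hA2' : C₁ * K + 2 ≤ 2 * C₀ * A := by
    have := (div_le_iff₀ (by positivity : (0:ℝ) < 2 * C₀)).mp hA2; linarith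
  have hApos : 0 < A := lt_of_lt_of_le one_pos hA1
  refine ⟨A, hApos, fun t ht => ?_⟩
  -- key bound: (log x)^2 ≤ K * x^(s-1) for x ≥ 2
  have hlogsq : ∀ x : ℝ, 2 ≤ x → (Real.log x) ^ 2 ≤ K * x ^ (s - 1) := by
    intro x hx
    have hx0 : (0:ℝ) < x := by linarith
    have h1 : Real.log x = (2 / (s - 1)) * ((s - 1) / 2 * Real.log x) := by
      field_simp
    have h2 : (s - 1) / 2 * Real.log x = Real.log (x ^ ((s - 1) / 2)) :=
      (Real.log_rpow hx0 _).symm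
    have h3 : Real.log (x ^ ((s - 1) / 2)) ≤ x ^ ((s - 1) / 2) := by
      have := Real.log_le_sub_one_of_pos (Real.rpow_pos_of_pos hx0 ((s - 1) / 2))
      linarith
    have h4 : Real.log x ≤ (2 / (s - 1)) * x ^ ((s - 1) / 2) := by
      rw [h1, h2]
      exact mul_le_mul_of_nonneg_left h3 (by positivity)
    have hlognn : 0 ≤ Real.log x := Real.log_nonneg (by linarith)
    have h5 : (Real.log x) ^ 2 ≤ ((2 / (s - 1)) * x ^ ((s - 1) / 2)) ^ 2 := by
      apply pow_le_pow_left₀ hlognn h4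
    have h6 : (x ^ ((s - 1) / 2)) ^ 2 = x ^ (s - 1) := by
      rw [← Real.rpow_natCast (x ^ ((s - 1) / 2)) 2, ← Real.rpow_mul hx0.le]
      norm_num
    calc (Real.log x) ^ 2 ≤ ((2 / (s - 1)) * x ^ ((s - 1) / 2)) ^ 2 := h5
      _ = K * x ^ (s - 1) := by rw [mul_pow, h6]
  -- comparison on [2, t]
  set B : ℝ → ℝ := fun x => A / Real.log x with hB
  set B' : ℝ → ℝ := fun x => (0 * Real.log x - A * x⁻¹) / (Real.log x) ^ 2 with hB'
  have key : ∀ ⦃x⦄, x ∈ Icc 2 t → Φ x ≤ B x := by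
    refine image_le_of_deriv_right_lt_deriv_boundary' (f' := Φ') (B' := B')
      (fun x hx => ((hderiv x hx.1).continuousAt).continuousWithinAt)
      (fun x hx => (hderiv x hx.1).hasDerivWithinAt) ?_ ?_ ?_ ?_
    · -- Φ 2 ≤ A / log 2
      have hl2 : 0 < Real.log 2 := Real.log_pos (by norm_num)
      have hl2' : Real.log 2 ≤ 1 := by
        have := Real.log_le_sub_one_of_pos (by norm_num : (0:ℝ) < 2); linarith
      have h1 : Φ 2 ≤ A * Real.log 2 := by
        have := (div_le_iff₀ hl2).mp hAΦ; linarith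
      have h2 : A * Real.log 2 ≤ A / Real.log 2 := by
        rw [le_div_iff₀ hl2]
        have hsq : Real.log 2 * Real.log 2 ≤ 1 := by nlinarith
        nlinarith
      exact le_trans h1 h2
    · intro x hx
      have hx0 : (0:ℝ) < x := by have := hx.1; linarith
      have hlx : Real.log x ≠ 0 := by
        have : 0 < Real.log x := Real.log_pos (by have := hx.1; linarith)
        linarith
      exact ((continuousAt_const.div (Real.continuousAt_log hx0.ne') hlx)).continuousWithinAt
    · intro x hx
      have hx0 : (0:ℝ) < x := by have := hx.1; linarith
      have hlx : Real.log x ≠ 0 := by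
        have : 0 < Real.log x := Real.log_pos (by have := hx.1; linarith)
        linarith
      exact ((hasDerivAt_const x A).div (Real.hasDerivAt_log hx0.ne') hlx).hasDerivWithinAt
    · intro x hx hfx
      have hx2 : (2:ℝ) ≤ x := hx.1
      have hx0 : (0:ℝ) < x := by linarith
      have hL : 0 < Real.log x := Real.log_pos (by linarith)
      have hpow : (0:ℝ) < x ^ (s - 1) := Real.rpow_pos_of_pos hx0 _
      have hpows : (0:ℝ) < x ^ s := Real.rpow_pos_of_pos hx0 _
      have hxs : x ^ (s - 1) * x = x ^ s := by
        rw [← Real.rpow_add_one hx0.ne' (s - 1)]; ring_nf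
      have hlog2 : (Real.log x) ^ 2 ≤ K * x ^ (s - 1) := hlogsq x hx2
      have hstep : C₁ * (Real.log x) ^ 2 ≤ C₁ * K * x ^ (s - 1) := by
        calc C₁ * (Real.log x) ^ 2 ≤ C₁ * (K * x ^ (s - 1)) :=
              mul_le_mul_of_nonneg_left hlog2 hC₁
          _ = C₁ * K * x ^ (s - 1) := by ring
      have hmain : -(2 * C₀ / x) * (Φ x) ^ 2 + C₁ / x ^ s < B' x := by
        rw [hfx]
        show -(2 * C₀ / x) * (A / Real.log x) ^ 2 + C₁ / x ^ s
            < (0 * Real.log x - A * x⁻¹) / (Real.log x) ^ 2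
        rw [← sub_pos]
        have hne1 : x ≠ 0 := hx0.ne'
        have hne2 : Real.log x ≠ 0 := hL.ne'
        have hne3 : x ^ s ≠ 0 := hpows.ne'
        have expand : (0 * Real.log x - A * x⁻¹) / (Real.log x) ^ 2 -
            (-(2 * C₀ / x) * (A / Real.log x) ^ 2 + C₁ / x ^ s)
            = ((2 * C₀ * A ^ 2 - A) * x ^ s - C₁ * x * (Real.log x) ^ 2) /
              (x * (Real.log x) ^ 2 * x ^ s) := by
          field_simp
          ring
        rw [expand]
        apply div_pos _ (by positivity)
        have h7 : C₁ * x * (Real.log x) ^ 2 ≤ C₁ * K * x ^ s := by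
          calc C₁ * x * (Real.log x) ^ 2 = (C₁ * (Real.log x) ^ 2) * x := by ring
            _ ≤ (C₁ * K * x ^ (s - 1)) * x := mul_le_mul_of_nonneg_right hstep hx0.le
            _ = C₁ * K * (x ^ (s - 1) * x) := by ring
            _ = C₁ * K * x ^ s := by rw [hxs]
        have h8 : C₁ * K + 1 ≤ 2 * C₀ * A ^ 2 - A := by
          nlinarith [mul_le_mul_of_nonneg_left hA2' (le_trans zero_le_one hA1),
            mul_nonneg (mul_nonneg hC₁ hKpos.le) (sub_nonneg.2 hA1)]
        nlinarith [mul_le_mul_of_nonneg_right h8 hpows.le]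
      exact lt_of_le_of_lt (hineq x hx2) hmain
  exact key ⟨ht, le_rfl⟩
end
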